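/- Fireballs are stable by substitution: for every FBC term t, (1) if u is an inert then u{x:=t} is an inert, and (2) if u is a fireball then u{x:=t} is a fireball. -/
import Mathlib


/-- Terms of the fireball calculus (FBC): variables, symbols, abstractions, applications. -/
inductive Term : Type
  | var : ℕ → Term
  | sym : ℕ → Term
  | lam : ℕ → Term → Term
  | app : Term → Term → Term

/-- Free variables of a term (symbols do not count as variables). -/
def Term.fv : Term → Finset ℕ
  | .var x => {x}
  | .sym _ => ∅
  | .lam x t => Term.fv t \ {x}
  | .app t u => Term.fv t ∪ Term.fv u

/-- A term is closed when it has no free variables. -/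
def Term.Closed (t : Term) : Prop := Term.fv t = ∅

/-- Capture-avoiding substitution `t{x:=u}` (under the convention that bound
variables are renamed apart, substitution proceeds structurally, stopping at
binders for `x`). -/
def Term.subst (x : ℕ) (u : Term) : Term → Term
  | .var y => if y = x then u else .var y
  | .sym a => .sym a
  | .lam y t => if y = x then .lam y t else .lam y (Term.subst x u t)
  | .app t s => .app (Term.subst x u t) (Term.subst x u s)

mutual
  /-- Inerts: a symbol applied to zero or more fireballs. -/
  inductive Inert : Term → Prop
    | sym : ∀ a : ℕ, Inert (Term.sym a)
    | app : ∀ t f : Term, Inert t → Fireball f → Inert (Term.app t f)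
  /-- Fireballs: values (abstractions) or inerts. -/
  inductive Fireball : Term → Prop
    | val : ∀ (x : ℕ) (t : Term), Fireball (Term.lam x t)
    | inert : ∀ t : Term, Inert t → Fireball t
end

/-- Contexts with one hole, of the shape E ::= ⟨·⟩ | t E | E t. -/
inductive Ctx : Type
  | hole : Ctx
  | appR : Term → Ctx → Ctx
  | appL : Ctx → Term → Ctx

/-- Plugging a term in a context. -/
def Ctx.plug : Ctx → Term → Term
  | .hole, t => t
  | .appR u E, t => Term.app u (Ctx.plug E t)
  | .appL E f, t => Term.app (Ctx.plug E t) f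

/-- Evaluation contexts E ::= ⟨·⟩ | t E | E f, where f must be a fireball. -/
inductive Ctx.Eval : Ctx → Prop
  | hole : Ctx.Eval Ctx.hole
  | appR : ∀ (t : Term) (E : Ctx), Ctx.Eval E → Ctx.Eval (Ctx.appR t E)
  | appL : ∀ (E : Ctx) (f : Term), Ctx.Eval E → Fireball f → Ctx.Eval (Ctx.appL E f)

/-- The fireball reduction →f : E⟨(λx.t) f⟩ →f E⟨t{x:=f}⟩ with f a fireball. -/
inductive Step : Term → Term → Prop
  | fire : ∀ (E : Ctx) (x : ℕ) (t f : Term), Ctx.Eval E → Fireball f →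
      Step (Ctx.plug E (Term.app (Term.lam x t) f)) (Ctx.plug E (Term.subst x f t))

/-- fireballs are stable by substitution: if u is an inert then u{x:=t}
is an inert, and if u is a fireball then u{x:=t} is a fireball. -/
theorem fireball_stable_subst (t : Term) (x : ℕ) (u : Term) :
    (Inert u → Inert (Term.subst x t u)) ∧
    (Fireball u → Fireball (Term.subst x t u)) := by
  induction u with
  | var y =>
    refine ⟨(fun h => by cases h), fun h => ?_⟩
    cases h with
    | inert _ h => cases h
  | sym a =>
    exact ⟨fun _ => Inert.sym a, fun _ => Fireball.inert _ (Inert.sym a)⟩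
  | lam y s ih =>
    refine ⟨(fun h => by cases h), fun _ => ?_⟩
    simp only [Term.subst]
    split <;> exact Fireball.val _ _
  | app s f ihs ihf =>
    constructor
    · intro h
      cases h with
      | app _ _ hi hf => exact Inert.app _ _ (ihs.1 hi) (ihf.2 hf)
    · intro h
      cases h with
      | inert _ hi =>
        cases hi with
        | app _ _ hi hf =>
          exact Fireball.inert _ (Inert.app _ _ (ihs.1 hi) (ihf.2 hf))
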